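/- Let G be a connected finite simple graph on n vertices, let k be an even integer with 4 ≤ k ≤ n, let V_h be a set of k/2 vertices of G of highest degrees, and let d_h = (2/k)·∑_{v ∈ V_h} d_G(v) be the average degree (in G) of the vertices of V_h. Then there exists a set S of exactly k vertices of G such that G[S] is connected and σ(G[S]) ≥ (√k/(2n))·d_h. -/

import Mathlib

open Finset

variable {V : Type*}

noncomputable def graphDensity [Fintype V] (G : SimpleGraph V) : ℝ :=
  2 * G.edgeSet.ncard / Fintype.card V

noncomputable def setDensity (G : SimpleGraph V) (A : Set V) : ℝ :=
  2 * (G.induce A).edgeSet.ncard / A.ncard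

noncomputable def indDensity (G : SimpleGraph V) (S : Finset V) : ℝ :=
  2 * (G.induce (S : Set V)).edgeSet.ncard / S.card

noncomputable def subDensity {G : SimpleGraph V} (H : G.Subgraph) : ℝ :=
  2 * H.edgeSet.ncard / H.verts.ncard

noncomputable def maxKDensity (G : SimpleGraph V) (k : ℕ) : ℝ :=
  sSup {x : ℝ | ∃ H : G.Subgraph, H.verts.ncard = k ∧ x = subDensity H}

noncomputable def maxConnKDensity (G : SimpleGraph V) (k : ℕ) : ℝ :=
  sSup {x : ℝ | ∃ H : G.Subgraph, H.verts.ncard = k ∧ H.Connected ∧ x = subDensity H}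

noncomputable def maxDensity (G : SimpleGraph V) : ℝ :=
  sSup {x : ℝ | ∃ H : G.Subgraph, H.verts.Nonempty ∧ x = subDensity H}

def cutCount (G : SimpleGraph V) [DecidableRel G.Adj] (S T : Finset V) : ℕ :=
  ((S ×ˢ T).filter fun p => G.Adj p.1 p.2).card

def IsCompOf (G : SimpleGraph V) (A W : Set V) : Prop :=
  A.Nonempty ∧ A ⊆ W ∧ (G.induce A).Connected ∧
    ∀ B : Set V, A ⊆ B → B ⊆ W → (G.induce B).Connected → B = A

noncomputable def subWDensity {G : SimpleGraph V} (w : Sym2 V → ℝ) (H : G.Subgraph) : ℝ :=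
  2 * (∑ᶠ e ∈ H.edgeSet, w e) / H.verts.ncard

noncomputable def indWDensity (G : SimpleGraph V) (w : Sym2 V → ℝ) (S : Finset V) : ℝ :=
  2 * (∑ᶠ e ∈ {e : Sym2 V | e ∈ G.edgeSet ∧ ∀ v ∈ e, v ∈ S}, w e) / S.card

noncomputable def maxKWDensity (G : SimpleGraph V) (w : Sym2 V → ℝ) (k : ℕ) : ℝ :=
  sSup {x : ℝ | ∃ H : G.Subgraph, H.verts.ncard = k ∧ x = subWDensity w H}

noncomputable def maxConnKWDensity (G : SimpleGraph V) (w : Sym2 V → ℝ) (k : ℕ) : ℝ :=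
  sSup {x : ℝ | ∃ H : G.Subgraph, H.verts.ncard = k ∧ H.Connected ∧ x = subWDensity w H}

/-
Let `r = k/2 = #Vh` and count edges of induced subgraphs by ordered pairs,
`e(S) = #(G.interedges S S) = 2|E(G[S])|`.
The degree sum of `Vh` is `e(Vh)` plus the number of edges from `Vh` to its complement.
Adding to `Vh` the `r` outside vertices with most neighbours in `Vh` captures at least a
fraction `r/n` of those edges, so the resulting `k`-set `S₀` has `k · ∑_{Vh} deg ≤ n · e(S₀)`.
Some connected piece `A` of `G[S₀]` is at least as dense as `S₀` (a mediant argument), and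
`A` grows inside the connected graph `G` to a connected `k`-set `S`. If `#A ≥ √k` the density of
`A` carries over; otherwise `e(S₀)/k ≤ e(A)/#A ≤ #A < √k` makes the target bound smaller than
the density `≥ 2(k-1)/k ≥ 1` that every connected `k`-set has.
-/

namespace Finset

variable {α : Type*} [DecidableEq α]

lemma exists_subset_card_eq_forall_le {β : Type*} [LinearOrder β] (f : α → β) {U : Finset α}
    {r : ℕ} (hr : r ≤ #U) : ∃ T ⊆ U, #T = r ∧ ∀ t ∈ T, ∀ u ∈ U \ T, f u ≤ f t := by
  induction r with
  | zero => exact ⟨∅, empty_subset _, card_empty, by simp⟩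
  | succ r ih =>
    obtain ⟨T, hTU, rfl, hT⟩ := ih (by omega)
    obtain ⟨m, hm, hmax⟩ := exists_max_image (U \ T) f
      (card_pos.1 (by rw [card_sdiff_of_subset hTU]; omega))
    obtain ⟨hmU, hmT⟩ := mem_sdiff.1 hm
    refine ⟨insert m T, insert_subset hmU hTU, card_insert_of_notMem hmT, fun t ht u hu ↦ ?_⟩
    rw [sdiff_insert] at hu
    rcases mem_insert.1 ht with rfl | ht
    · exact hmax u (mem_of_mem_erase hu)
    · exact hT t ht u (mem_of_mem_erase hu)

lemma card_nsmul_sum_le_card_nsmul_sum {M : Type*} [AddCommMonoid M] [PartialOrder M]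
    [IsOrderedAddMonoid M] (f : α → M) {T U : Finset α} (hTU : T ⊆ U)
    (h : ∀ t ∈ T, ∀ u ∈ U \ T, f u ≤ f t) :
    #T • ∑ u ∈ U, f u ≤ #U • ∑ t ∈ T, f t := by
  have cross : #T • ∑ u ∈ U \ T, f u ≤ #(U \ T) • ∑ t ∈ T, f t :=
    calc #T • ∑ u ∈ U \ T, f u = ∑ _t ∈ T, ∑ u ∈ U \ T, f u := by rw [sum_const]
      _ ≤ ∑ t ∈ T, ∑ _u ∈ U \ T, f t := sum_le_sum fun t ht ↦ sum_le_sum fun u hu ↦ h t ht u hu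
      _ = #(U \ T) • ∑ t ∈ T, f t := by rw [sum_comm, sum_const]
  calc #T • ∑ u ∈ U, f u = #T • ∑ t ∈ T, f t + #T • ∑ u ∈ U \ T, f u := by
        rw [← sum_sdiff hTU, nsmul_add, add_comm]
    _ ≤ #T • ∑ t ∈ T, f t + #(U \ T) • ∑ t ∈ T, f t := add_le_add le_rfl cross
    _ = #U • ∑ t ∈ T, f t := by rw [← add_nsmul, add_comm, card_sdiff_add_card_eq_card hTU]

end Finset

-- The mediant `(x + y) / (a + b)` is at most `x / a` or at most `y / b`, cross-multiplied.
lemma mediant_le_or (a b x y : ℕ) :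
    a * (x + y) ≤ (a + b) * x ∨ b * (x + y) ≤ (a + b) * y := by
  by_contra! h
  nlinarith

namespace SimpleGraph

section Interedges

variable (G : SimpleGraph V) [DecidableRel G.Adj]

lemma card_interedges_comm (s t : Finset V) :
    #(G.interedges s t) = #(G.interedges t s) :=
  haveI := G.symm
  Rel.card_interedges_comm (r := G.Adj) s t

lemma interedges_union_left [DecidableEq V] (s₁ s₂ t : Finset V) :
    G.interedges (s₁ ∪ s₂) t = G.interedges s₁ t ∪ G.interedges s₂ t := by
  ext ⟨x, y⟩
  simp only [mem_union, mem_interedges_iff]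
  tauto

lemma interedges_union_right [DecidableEq V] (s t₁ t₂ : Finset V) :
    G.interedges s (t₁ ∪ t₂) = G.interedges s t₁ ∪ G.interedges s t₂ := by
  ext ⟨x, y⟩
  simp only [mem_union, mem_interedges_iff]
  tauto

lemma card_interedges_union_self [DecidableEq V] {s t : Finset V} (h : Disjoint s t) :
    #(G.interedges (s ∪ t) (s ∪ t)) =
      #(G.interedges s s) + 2 * #(G.interedges s t) + #(G.interedges t t) := by
  rw [interedges_union_left, card_union_of_disjoint (G.interedges_disjoint_left h _),
    interedges_union_right, interedges_union_right,
    card_union_of_disjoint (G.interedges_disjoint_right _ h),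
    card_union_of_disjoint (G.interedges_disjoint_right _ h), G.card_interedges_comm t s]
  ring

lemma card_interedges_eq_sum (s t : Finset V) :
    #(G.interedges s t) = ∑ x ∈ s, #{y ∈ t | G.Adj x y} := by
  rw [interedges_def, card_filter, sum_product]
  simp only [card_filter]

lemma sum_degree_eq_card_interedges [Fintype V] (s : Finset V) :
    ∑ v ∈ s, G.degree v = #(G.interedges s univ) := by
  rw [card_interedges_eq_sum]
  refine sum_congr rfl fun v _ ↦ ?_
  rw [← neighborFinset_eq_filter, card_neighborFinset_eq_degree]

lemma two_mul_ncard_edgeSet_induce (s : Finset V) :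
    2 * (G.induce (s : Set V)).edgeSet.ncard = #(G.interedges s s) := by
  rw [Set.ncard_eq_toFinset_card', ← edgeFinset, two_mul_card_edgeFinset]
  refine card_bij (fun p _ ↦ (p.1.1, p.2.1)) ?_ ?_ ?_
  · rintro ⟨⟨x, hx⟩, ⟨y, hy⟩⟩ h
    exact G.mk_mem_interedges_iff.2 ⟨hx, hy, by simpa using h⟩
  · rintro ⟨⟨x, hx⟩, ⟨y, hy⟩⟩ - ⟨⟨x', hx'⟩, ⟨y', hy'⟩⟩ - h
    simpa using h
  · rintro ⟨x, y⟩ h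
    rw [mem_interedges_iff] at h
    exact ⟨(⟨x, h.1⟩, ⟨y, h.2.1⟩), by simpa using h.2.2, rfl⟩

lemma two_mul_card_le_card_interedges_add_two {s : Finset V} (h : (G.induce (s : Set V)).Connected) :
    2 * #s ≤ #(G.interedges s s) + 2 := by
  have := h.card_vert_le_card_edgeSet_add_one
  rw [Nat.card_coe_set_eq, Nat.card_coe_set_eq, Set.ncard_coe_finset] at this
  have := G.two_mul_ncard_edgeSet_induce s
  omega

end Interedges

section Connectivity

variable (G : SimpleGraph V) [DecidableEq V]

lemma exists_ssubset_forall_not_adj_of_not_connected {s : Finset V} (hs : s.Nonempty)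
    (h : ¬(G.induce (s : Set V)).Connected) :
    ∃ t ⊂ s, t.Nonempty ∧ ∀ u ∈ t, ∀ w ∈ s \ t, ¬G.Adj u w := by
  classical
  obtain ⟨a, ha⟩ := hs
  set t := {w ∈ s | ∃ hw : w ∈ s, (G.induce (s : Set V)).Reachable ⟨a, ha⟩ ⟨w, hw⟩}
  have hat : a ∈ t := mem_filter.2 ⟨ha, ha, .rfl⟩
  have hts : t ≠ s := by
    rintro hts
    refine h ((connected_iff_exists_forall_reachable _).2 ⟨⟨a, ha⟩, ?_⟩)
    rintro ⟨w, hw⟩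
    obtain ⟨-, _, hreach⟩ := mem_filter.1 (hts ▸ hw : w ∈ t)
    exact hreach
  refine ⟨t, Finset.ssubset_iff_subset_ne.2 ⟨filter_subset _ _, hts⟩, ⟨a, hat⟩, ?_⟩
  rintro u hu w hw hadj
  obtain ⟨hws, hwt⟩ := mem_sdiff.1 hw
  obtain ⟨hus, _, hreach⟩ := mem_filter.1 hu
  exact hwt (mem_filter.2 ⟨hws, hws,
    hreach.trans (Adj.reachable (G := G.induce (s : Set V)) (u := ⟨u, hus⟩) (v := ⟨w, hws⟩) hadj)⟩)

lemma exists_connected_subset_card_mul_le [DecidableRel G.Adj] (s : Finset V) (hs : s.Nonempty) :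
    ∃ A ⊆ s, (G.induce (A : Set V)).Connected ∧
      #A * #(G.interedges s s) ≤ #s * #(G.interedges A A) := by
  induction s using Finset.strongInduction with
  | H s ih =>
  by_cases hc : (G.induce (s : Set V)).Connected
  · exact ⟨s, subset_rfl, hc, le_rfl⟩
  obtain ⟨t, hts, ht, hno⟩ := G.exists_ssubset_forall_not_adj_of_not_connected hs hc
  have he : #(G.interedges s s) = #(G.interedges t t) + #(G.interedges (s \ t) (s \ t)) := by
    have hcross : G.interedges t (s \ t) = ∅ :=
      filter_eq_empty_iff.2 fun p hp ↦ hno p.1 (mem_product.1 hp).1 p.2 (mem_product.1 hp).2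
    have := G.card_interedges_union_self (disjoint_sdiff : Disjoint t (s \ t))
    rwa [union_sdiff_of_subset hts.subset, hcross, card_empty, mul_zero, add_zero] at this
  have hcard : #s = #t + #(s \ t) := by rw [← card_sdiff_add_card_eq_card hts.subset, add_comm]
  have descend : ∀ p ⊂ s, p.Nonempty → #p * #(G.interedges s s) ≤ #s * #(G.interedges p p) →
      ∃ A ⊆ s, (G.induce (A : Set V)).Connected ∧
        #A * #(G.interedges s s) ≤ #s * #(G.interedges A A) := by
    intro p hps hp hdense
    obtain ⟨A, hAp, hA, hAdense⟩ := ih p hps hp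
    refine ⟨A, hAp.trans hps.subset, hA, Nat.le_of_mul_le_mul_left ?_ hp.card_pos⟩
    calc #p * (#A * #(G.interedges s s)) = #A * (#p * #(G.interedges s s)) := by ring
      _ ≤ #A * (#s * #(G.interedges p p)) := Nat.mul_le_mul_left _ hdense
      _ = #s * (#A * #(G.interedges p p)) := by ring
      _ ≤ #s * (#p * #(G.interedges A A)) := Nat.mul_le_mul_left _ hAdense
      _ = #p * (#s * #(G.interedges A A)) := by ring
  rcases mediant_le_or #t #(s \ t) #(G.interedges t t) #(G.interedges (s \ t) (s \ t)) with h | h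
  · exact descend t hts ht (by rwa [he, hcard])
  · exact descend (s \ t) (sdiff_ssubset hts.subset ht) (sdiff_nonempty.2 hts.not_subset)
      (by rwa [he, hcard])

lemma exists_insert_connected (hG : G.Connected) {s : Finset V}
    (hs : (G.induce (s : Set V)).Connected) {b : V} (hb : b ∉ s) :
    ∃ w ∉ s, (G.induce ((insert w s : Finset V) : Set V)).Connected := by
  obtain ⟨⟨a, ha⟩⟩ := hs.nonempty
  obtain ⟨d, -, hd₁, hd₂⟩ := (hG.preconnected a b).some.exists_boundary_dart (s : Set V) ha hb
  refine ⟨d.snd, hd₂, ?_⟩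
  have := G.induce_union_connected hs.preconnected
    (G.induce_pair_connected_of_adj d.adj).preconnected ⟨d.fst, hd₁, by simp⟩
  rwa [Set.union_insert, Set.insert_eq_of_mem (Set.mem_union_left _ hd₁), Set.union_singleton,
    ← coe_insert] at this

lemma exists_connected_superset_card [Fintype V] (hG : G.Connected) {A : Finset V}
    (hA : (G.induce (A : Set V)).Connected) {m : ℕ} (hAm : #A ≤ m) (hm : m ≤ Fintype.card V) :
    ∃ S, A ⊆ S ∧ #S = m ∧ (G.induce (S : Set V)).Connected := by
  induction m, hAm using Nat.le_induction with
  | base => exact ⟨A, subset_rfl, rfl, hA⟩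
  | succ m hAm ih =>
    obtain ⟨S, hAS, rfl, hS⟩ := ih (by omega)
    obtain ⟨b, hb⟩ : ∃ b, b ∉ S := by
      by_contra! h
      rw [eq_univ_iff_forall.2 h, card_univ] at hm
      omega
    obtain ⟨w, hw, hconn⟩ := G.exists_insert_connected hG hS hb
    exact ⟨insert w S, hAS.trans (subset_insert _ _), card_insert_of_notMem hw, hconn⟩

end Connectivity

section Degrees

variable [Fintype V] [DecidableEq V] (G : SimpleGraph V) [DecidableRel G.Adj]

lemma exists_disjoint_card_eq_mul_sum_degree_le (s : Finset V) (hs : 2 * #s ≤ Fintype.card V) :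
    ∃ t, Disjoint s t ∧ #t = #s ∧
      2 * #s * ∑ v ∈ s, G.degree v ≤ Fintype.card V * #(G.interedges (s ∪ t) (s ∪ t)) := by
  set f : V → ℕ := fun u ↦ #{y ∈ s | G.Adj u y}
  have hsc : #s ≤ #sᶜ := by rw [card_compl]; omega
  obtain ⟨t, hts, ht, htop⟩ := exists_subset_card_eq_forall_le f hsc
  have havg : #s * ∑ u ∈ sᶜ, f u ≤ #sᶜ * ∑ u ∈ t, f u := by
    simpa only [ht, smul_eq_mul] using card_nsmul_sum_le_card_nsmul_sum f hts htop
  have hdeg : ∑ v ∈ s, G.degree v = #(G.interedges s s) + #(G.interedges sᶜ s) := by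
    rw [sum_degree_eq_card_interedges, ← union_compl s, interedges_union_right,
      card_union_of_disjoint (G.interedges_disjoint_right _ disjoint_compl_right),
      G.card_interedges_comm s sᶜ]
  have hdisj : Disjoint s t := disjoint_of_subset_right hts disjoint_compl_right
  refine ⟨t, hdisj, ht, ?_⟩
  have hcross (p : Finset V) : #(G.interedges p s) = ∑ u ∈ p, f u := G.card_interedges_eq_sum p s
  rw [G.card_interedges_union_self hdisj, hdeg, G.card_interedges_comm s t, hcross sᶜ, hcross t]
  have : #sᶜ ≤ Fintype.card V := card_le_univ _
  nlinarith [Nat.mul_le_mul_right #(G.interedges s s) hs,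
    Nat.mul_le_mul_right (∑ u ∈ t, f u) this]

end Degrees

end SimpleGraph

lemma indDensity_eq_card_interedges_div (G : SimpleGraph V) [DecidableRel G.Adj] (s : Finset V) :
    indDensity G s = #(G.interedges s s) / #s := by
  rw [indDensity, ← G.two_mul_ncard_edgeSet_induce]
  push_cast
  rfl

/- The arithmetic core, with `k = #S₀ = #S`, `a = #A`, `d` the degree sum of `Vh`, and
`e₀, eA, eS` the ordered-pair edge counts of `S₀ ⊇ A` and of the grown set `S ⊇ A`. -/
lemma sqrt_mul_le_mul_of_dense_piece {k n a d e₀ eA eS : ℝ} (hk : 0 < k) (hn : 0 ≤ n)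
    (ha : 0 < a) (hd : 0 ≤ d) (h₀ : k * d ≤ n * e₀) (hA : a * e₀ ≤ k * eA) (hAsq : eA ≤ a * a)
    (hAS : eA ≤ eS) (hkS : k ≤ eS) : √k * d ≤ n * eS := by
  rcases le_or_gt √k a with hbig | hsmall
  · refine le_of_mul_le_mul_right ?_ hk
    calc √k * d * k ≤ a * (k * d) := by
          rw [mul_assoc, mul_comm d]; exact mul_le_mul_of_nonneg_right hbig (mul_nonneg hk.le hd)
      _ ≤ a * (n * e₀) := mul_le_mul_of_nonneg_left h₀ ha.le
      _ = n * (a * e₀) := by ring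
      _ ≤ n * (k * eS) := mul_le_mul_of_nonneg_left (hA.trans (by gcongr)) hn
      _ = n * eS * k := by ring
  · have he₀ : e₀ ≤ k * a := le_of_mul_le_mul_left
      (hA.trans ((mul_le_mul_of_nonneg_left hAsq hk.le).trans_eq (by ring))) ha
    have hd' : d ≤ n * √k := by
      refine le_of_mul_le_mul_left ?_ hk
      calc k * d ≤ n * e₀ := h₀
        _ ≤ n * (k * √k) := by gcongr; exact he₀.trans (by gcongr)
        _ = k * (n * √k) := by ring
    calc √k * d ≤ √k * (n * √k) := by gcongr
      _ = n * k := by rw [mul_left_comm, Real.mul_self_sqrt hk.le]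
      _ ≤ n * eS := by gcongr

theorem stmt10_general [Fintype V] (G : SimpleGraph V) [DecidableRel G.Adj]
    (hG : G.Connected) (k : ℕ) (hke : Even k) (hk4 : 4 ≤ k) (hkn : k ≤ Fintype.card V)
    (Vh : Finset V) (hVh : Vh.card = k / 2) :
    ∃ S : Finset V, S.card = k ∧ (G.induce (S : Set V)).Connected ∧
      indDensity G S ≥ (Real.sqrt k / (2 * (Fintype.card V : ℝ))) *
        ((2 / (k : ℝ)) * ∑ v ∈ Vh, (G.degree v : ℝ)) := by
  classical
  have hk : 2 * #Vh = k := by rw [hVh, Nat.two_mul_div_two_of_even hke]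
  obtain ⟨T, hdisj, hT, hS₀dense⟩ := G.exists_disjoint_card_eq_mul_sum_degree_le Vh (by omega)
  have hS₀ : #(Vh ∪ T) = k := by rw [card_union_of_disjoint hdisj]; omega
  obtain ⟨A, hAS₀, hA, hAdense⟩ :=
    G.exists_connected_subset_card_mul_le (Vh ∪ T) (card_pos.1 (by omega))
  obtain ⟨S, hAS, hS, hSconn⟩ :=
    G.exists_connected_superset_card hG hA ((card_le_card hAS₀).trans hS₀.le) hkn
  refine ⟨S, hS, hSconn, ?_⟩
  have hkS : k ≤ #(G.interedges S S) := by
    have := G.two_mul_card_le_card_interedges_add_two hSconn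
    omega
  have key := sqrt_mul_le_mul_of_dense_piece (k := k) (n := Fintype.card V) (a := #A)
    (d := ∑ v ∈ Vh, (G.degree v : ℝ)) (e₀ := #(G.interedges (Vh ∪ T) (Vh ∪ T)))
    (eA := #(G.interedges A A)) (eS := #(G.interedges S S)) (by positivity) (by positivity)
    (by exact_mod_cast card_pos.2 (coe_nonempty.1 (Set.nonempty_coe_sort.1 hA.nonempty)))
    (by positivity) (by rw [← hk]; exact_mod_cast hS₀dense) (by rw [← hS₀]; exact_mod_cast hAdense)
    (by exact_mod_cast G.card_interedges_le_mul A A)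
    (by exact_mod_cast card_le_card (G.interedges_mono hAS hAS)) (by exact_mod_cast hkS)
  rw [ge_iff_le, indDensity_eq_card_interedges_div, hS]
  have hn : (0 : ℝ) < Fintype.card V := by exact_mod_cast (by omega : 0 < Fintype.card V)
  calc √(k : ℝ) / (2 * Fintype.card V) * (2 / k * ∑ v ∈ Vh, (G.degree v : ℝ))
      = √k * (∑ v ∈ Vh, (G.degree v : ℝ)) / Fintype.card V / k := by ring
    _ ≤ #(G.interedges S S) / k := by
      gcongr
      exact (div_le_iff₀ hn).2 (by linarith)

/-- with `V_h` a set of `k/2` vertices of highest degrees and `d_h`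
their average degree, `G` has a connected `k`-subgraph of density at least
`(√k/(2n))·d_h`. -/
theorem stmt10 [Fintype V] [DecidableEq V] (G : SimpleGraph V) [DecidableRel G.Adj]
    (hG : G.Connected) (k : ℕ) (hke : Even k) (hk4 : 4 ≤ k) (hkn : k ≤ Fintype.card V)
    (Vh : Finset V) (hVh : Vh.card = k / 2)
    (hhigh : ∀ u ∉ Vh, ∀ v ∈ Vh, G.degree u ≤ G.degree v) :
    ∃ S : Finset V, S.card = k ∧ (G.induce (S : Set V)).Connected ∧
      indDensity G S ≥ (Real.sqrt k / (2 * (Fintype.card V : ℝ))) *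
        ((2 / (k : ℝ)) * ∑ v ∈ Vh, (G.degree v : ℝ)) :=
  stmt10_general G hG k hke hk4 hkn Vh hVh
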